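/- arXiv:1401.0062 — 3 statements merged into one kernel-verified Lean document; each statement's English description precedes it below -/
import Mathlib

section
/- For all real numbers r > 0 and θ > 0, the series ∑_{z=1}^∞ (r)_z / ((r+θ)_z · z) converges and equals ψ(r+θ) − ψ(θ). In particular, the digamma distribution with parameters r, θ is a probability mass function: ∑_{z=1}^∞ digamma(z; r, θ) = 1. -/
open scoped BigOperators

/-- Rising factorial `(a)_z = a(a+1)⋯(a+z-1)`. -/
noncomputable def risingFac (a : ℝ) (z : ℕ) : ℝ := ∏ i ∈ Finset.range z, (a + i)

/-- Digamma function `ψ(x) = Γ'(x)/Γ(x)`. -/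
noncomputable def psi (x : ℝ) : ℝ := deriv Real.Gamma x / Real.Gamma x

/-- Probability mass function of the digamma distribution (for `z ≥ 1`). -/
noncomputable def digammaPMF (r θ : ℝ) (z : ℕ) : ℝ :=
  (psi (r + θ) - psi θ)⁻¹ * (risingFac r z / (risingFac (r + θ) z * z))

/-!
Write `S(θ)` for the series and `Ψ(θ) = ψ(r + θ) - ψ(θ)`. Both satisfy
`f(θ) - f(θ + 1) = 1/θ - 1/(r + θ)`: for `Ψ` this is `ψ(x + 1) = ψ(x) + 1/x`, for `S` the termwise
difference telescopes in the ratios `(r)_z / (r + θ)_z`, which decrease to `0`. Both are also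
`O(1/θ)` as `θ → ∞` (for `Ψ` because `ψ` is increasing, `Γ` being log-convex). Hence `S - Ψ` is
`1`-periodic and vanishes at infinity, so it is `0`.
-/

open Filter Finset Topology

lemma risingFac_pos {a : ℝ} (ha : 0 < a) (z : ℕ) : 0 < risingFac a z :=
  prod_pos fun _ _ => by positivity

lemma risingFac_succ (a : ℝ) (z : ℕ) : risingFac a (z + 1) = risingFac a z * (a + z) :=
  prod_range_succ _ _

lemma risingFac_succ' (a : ℝ) (z : ℕ) : risingFac a (z + 1) = a * risingFac (a + 1) z := by
  rw [risingFac, prod_range_succ', mul_comm, Nat.cast_zero, add_zero]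
  exact congrArg (a * ·) (prod_congr rfl fun i _ => by push_cast; ring)

noncomputable def pochRatio (r θ : ℝ) (z : ℕ) : ℝ := risingFac r z / risingFac (r + θ) z

noncomputable def digammaTerm (r θ : ℝ) (z : ℕ) : ℝ :=
  risingFac r (z + 1) / (risingFac (r + θ) (z + 1) * ((z : ℝ) + 1))

section PochRatio

variable {r θ : ℝ}

lemma pochRatio_pos (hr : 0 < r) (hθ : 0 < θ) (z : ℕ) : 0 < pochRatio r θ z :=
  div_pos (risingFac_pos hr z) (risingFac_pos (by linarith) z)

lemma pochRatio_one : pochRatio r θ 1 = r / (r + θ) := by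
  simp [pochRatio, risingFac]

lemma pochRatio_sub_succ (hrθ : 0 < r + θ) (z : ℕ) :
    pochRatio r θ z - pochRatio r θ (z + 1) = pochRatio r θ z * (θ / (r + θ + z)) := by
  have := (risingFac_pos hrθ z).ne'
  have : r + θ + z ≠ 0 := by positivity
  rw [pochRatio, pochRatio, risingFac_succ, risingFac_succ]
  field_simp
  ring

lemma pochRatio_antitone (hr : 0 < r) (hθ : 0 < θ) : Antitone (pochRatio r θ) := by
  refine antitone_nat_of_succ_le fun z => sub_nonneg.mp ?_
  rw [pochRatio_sub_succ (add_pos hr hθ)]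
  exact mul_nonneg (pochRatio_pos hr hθ z).le (by positivity)

lemma pochRatio_add_one_right (hrθ : 0 < r + θ) (z : ℕ) :
    pochRatio r (θ + 1) z = pochRatio r θ z * ((r + θ) / (r + θ + z)) := by
  have := (risingFac_pos hrθ z).ne'
  have := (risingFac_pos (by linarith : 0 < r + θ + 1) z).ne'
  have : r + θ + z ≠ 0 := by positivity
  have key := (risingFac_succ' (r + θ) z).symm.trans (risingFac_succ (r + θ) z)
  rw [pochRatio, pochRatio, ← add_assoc]
  field_simp
  linear_combination -risingFac r z * key

end PochRatio

lemma hasSum_sub_succ_of_antitone {f : ℕ → ℝ} (hf : Antitone f) {l : ℝ}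
    (hl : Tendsto f atTop (𝓝 l)) : HasSum (fun n => f n - f (n + 1)) (f 0 - l) := by
  refine (hasSum_iff_tendsto_nat_of_nonneg (fun n => sub_nonneg.mpr (hf n.le_succ)) _).mpr ?_
  simp only [sum_range_sub']
  exact tendsto_const_nhds.sub (hl.comp (tendsto_add_atTop_nat 0))

section DigammaTerm

variable {r θ : ℝ}

lemma digammaTerm_eq (z : ℕ) : digammaTerm r θ z = pochRatio r θ (z + 1) / ((z : ℝ) + 1) :=
  (div_div _ _ _).symm

lemma digammaTerm_pos (hr : 0 < r) (hθ : 0 < θ) (z : ℕ) : 0 < digammaTerm r θ z := by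
  rw [digammaTerm_eq]
  exact div_pos (pochRatio_pos hr hθ _) (by positivity)

lemma digammaTerm_le (hr : 0 < r) (hθ : 0 < θ) (z : ℕ) :
    digammaTerm r θ z ≤
      (r + θ + 1) / θ * (pochRatio r θ (z + 1) - pochRatio r θ (z + 2)) := by
  rw [digammaTerm_eq, pochRatio_sub_succ (add_pos hr hθ), ← mul_assoc, mul_comm _ (pochRatio r θ _),
    mul_assoc, div_eq_mul_one_div _ ((z : ℝ) + 1)]
  refine mul_le_mul_of_nonneg_left ?_ (pochRatio_pos hr hθ _).le
  rw [div_mul_div_comm, div_le_div_iff₀ (by positivity) (by positivity)]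
  push_cast
  nlinarith [mul_nonneg (add_pos hr hθ).le (Nat.cast_nonneg (α := ℝ) z)]

lemma sum_range_digammaTerm_le (hr : 0 < r) (hθ : 0 < θ) (n : ℕ) :
    ∑ z ∈ range n, digammaTerm r θ z ≤ (r + 1) / θ := by
  calc ∑ z ∈ range n, digammaTerm r θ z
      ≤ ∑ z ∈ range n, (r + θ + 1) / θ * (pochRatio r θ (z + 1) - pochRatio r θ (z + 2)) :=
        sum_le_sum fun z _ => digammaTerm_le hr hθ z
    _ = (r + θ + 1) / θ * (pochRatio r θ 1 - pochRatio r θ (n + 1)) := by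
        rw [← mul_sum, sum_range_sub' (fun z => pochRatio r θ (z + 1))]
    _ ≤ (r + θ + 1) / θ * (r / (r + θ)) := by
        rw [pochRatio_one]
        gcongr
        exact sub_le_self _ (pochRatio_pos hr hθ _).le
    _ ≤ (r + 1) / θ := by
        rw [div_mul_div_comm, div_le_div_iff₀ (by positivity) hθ]
        nlinarith [mul_pos hθ hθ]

lemma summable_digammaTerm (hr : 0 < r) (hθ : 0 < θ) : Summable (digammaTerm r θ) :=
  summable_of_sum_range_le (fun z => (digammaTerm_pos hr hθ z).le)
    (sum_range_digammaTerm_le hr hθ)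

lemma tsum_digammaTerm_le (hr : 0 < r) (hθ : 0 < θ) : ∑' z, digammaTerm r θ z ≤ (r + 1) / θ :=
  Real.tsum_le_of_sum_range_le (fun z => (digammaTerm_pos hr hθ z).le)
    (sum_range_digammaTerm_le hr hθ)

/-- If `(r)_z / (r+θ)_z` stayed above some `L > 0`, the summable series `∑ digammaTerm` would
dominate the harmonic series `∑ L / (z + 1)`. -/
lemma tendsto_pochRatio_zero (hr : 0 < r) (hθ : 0 < θ) :
    Tendsto (pochRatio r θ) atTop (𝓝 0) := by
  have hbdd : BddBelow (Set.range (pochRatio r θ)) :=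
    ⟨0, Set.forall_mem_range.mpr fun z => (pochRatio_pos hr hθ z).le⟩
  have hL := tendsto_atTop_ciInf (pochRatio_antitone hr hθ) hbdd
  set L := ⨅ z, pochRatio r θ z
  have hL0 : 0 ≤ L := le_ciInf fun z => (pochRatio_pos hr hθ z).le
  obtain hL0 | hL0 := hL0.eq_or_lt
  · rwa [← hL0] at hL
  have hharm : Summable fun z : ℕ => L * (1 / ((z : ℝ) + 1)) := by
    refine (summable_digammaTerm hr hθ).of_nonneg_of_le (fun z => by positivity) fun z => ?_
    rw [digammaTerm_eq, mul_one_div]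
    gcongr
    exact ciInf_le hbdd _
  rw [summable_mul_left_iff hL0.ne'] at hharm
  refine absurd ((summable_nat_add_iff 1).mp ?_) Real.not_summable_one_div_natCast
  simpa using hharm

lemma digammaTerm_sub_digammaTerm_add_one (hr : 0 < r) (hθ : 0 < θ) (z : ℕ) :
    digammaTerm r θ z - digammaTerm r (θ + 1) z =
      1 / θ * (pochRatio r θ (z + 1) - pochRatio r θ (z + 2)) := by
  have : r + θ + ((z + 1 : ℕ) : ℝ) ≠ 0 := by positivity
  rw [digammaTerm_eq, digammaTerm_eq, pochRatio_add_one_right (add_pos hr hθ), pochRatio_sub_succ (add_pos hr hθ)]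
  field_simp
  push_cast
  ring

lemma tsum_digammaTerm_sub_tsum_add_one (hr : 0 < r) (hθ : 0 < θ) :
    ∑' z, digammaTerm r θ z - ∑' z, digammaTerm r (θ + 1) z = 1 / θ - 1 / (r + θ) := by
  have htele := (hasSum_sub_succ_of_antitone (f := fun z => pochRatio r θ (z + 1))
    (fun _ _ h => pochRatio_antitone hr hθ (by omega))
    ((tendsto_pochRatio_zero hr hθ).comp (tendsto_add_atTop_nat 1))).mul_left (1 / θ)
  have hdiff := (summable_digammaTerm hr hθ).hasSum.sub
    (summable_digammaTerm hr (by linarith : 0 < θ + 1)).hasSum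
  simp only [digammaTerm_sub_digammaTerm_add_one hr hθ] at hdiff
  rw [hdiff.unique htele, zero_add, sub_zero, pochRatio_one]
  field_simp
  ring

end DigammaTerm

lemma psi_add_one {x : ℝ} (hx : 0 < x) : psi (x + 1) = psi x + 1 / x := by
  have hΓ : DifferentiableAt ℝ Real.Gamma x :=
    Real.differentiableAt_Gamma fun m => by linarith [(Nat.cast_nonneg m : (0 : ℝ) ≤ m)]
  have hΓ1 : DifferentiableAt ℝ Real.Gamma (x + 1) :=
    Real.differentiableAt_Gamma fun m => by linarith [(Nat.cast_nonneg m : (0 : ℝ) ≤ m)]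
  have hshift : HasDerivAt (fun y => Real.Gamma (y + 1)) (deriv Real.Gamma (x + 1)) x :=
    hΓ1.hasDerivAt.comp_add_const x 1
  have hprod : HasDerivAt (fun y => Real.Gamma (y + 1))
      (1 * Real.Gamma x + x * deriv Real.Gamma x) x := by
    refine ((hasDerivAt_id x).mul hΓ.hasDerivAt).congr_of_eventuallyEq ?_
    filter_upwards [eventually_ne_nhds hx.ne'] with y hy
    exact Real.Gamma_add_one hy
  have := (Real.Gamma_pos_of_pos hx).ne'
  rw [psi, psi, hshift.unique hprod, Real.Gamma_add_one hx.ne']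
  field_simp
  ring

lemma psi_add_nat {x : ℝ} (hx : 0 < x) (k : ℕ) :
    psi (x + k) = psi x + ∑ i ∈ range k, 1 / (x + i) := by
  induction k with
  | zero => simp
  | succ k ih =>
    rw [Nat.cast_succ, ← add_assoc, psi_add_one (by positivity), ih, sum_range_succ, add_assoc]

/-- `ψ` is the derivative of the convex function `log ∘ Γ` on `(0, ∞)`. -/
lemma psi_monotoneOn : MonotoneOn psi (Set.Ioi 0) := by
  have hderiv : ∀ x ∈ Set.Ioi (0 : ℝ), HasDerivAt (Real.log ∘ Real.Gamma) (psi x) x := by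
    intro x hx
    exact (Real.differentiableAt_Gamma fun m => by
      linarith [(Nat.cast_nonneg m : (0 : ℝ) ≤ m), Set.mem_Ioi.mp hx]).hasDerivAt.log
      (Real.Gamma_pos_of_pos hx).ne'
  intro x hx y hy hxy
  have := Real.convexOn_log_Gamma.monotoneOn_deriv (fun u hu => (hderiv u hu).differentiableAt)
    hx hy hxy
  rwa [(hderiv x hx).deriv, (hderiv y hy).deriv] at this

lemma psi_add_sub_psi_le {x r : ℝ} (hx : 0 < x) (hr : 0 ≤ r) :
    psi (x + r) - psi x ≤ ⌈r⌉₊ / x := by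
  have hmono : psi (x + r) ≤ psi (x + ⌈r⌉₊) :=
    psi_monotoneOn (by simp; positivity) (by simp; positivity) (by gcongr; exact Nat.le_ceil r)
  have hsum : ∑ i ∈ range ⌈r⌉₊, 1 / (x + i) ≤ ⌈r⌉₊ / x := by
    calc ∑ i ∈ range ⌈r⌉₊, 1 / (x + i) ≤ ∑ _i ∈ range ⌈r⌉₊, 1 / x :=
          sum_le_sum fun i _ => one_div_le_one_div_of_le hx (by simp)
      _ = ⌈r⌉₊ / x := by simp [div_eq_mul_inv]
  linarith [psi_add_nat hx ⌈r⌉₊]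

lemma tendsto_zero_of_nonneg_of_le_div {g : ℝ → ℝ} (C : ℝ) (h0 : ∀ᶠ x in atTop, 0 ≤ g x)
    (hC : ∀ᶠ x in atTop, g x ≤ C / x) : Tendsto g atTop (𝓝 0) :=
  tendsto_of_tendsto_of_tendsto_of_le_of_le' tendsto_const_nhds
    (tendsto_const_nhds.div_atTop tendsto_id) h0 hC

lemma eq_zero_of_add_one_eq_of_tendsto {D : ℝ → ℝ} (hper : ∀ x > 0, D (x + 1) = D x)
    (hlim : Tendsto D atTop (𝓝 0)) {θ : ℝ} (hθ : 0 < θ) : D θ = 0 := by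
  have hconst : ∀ n : ℕ, D (θ + n) = D θ := by
    intro n
    induction n with
    | zero => simp
    | succ n ih => rw [Nat.cast_succ, ← add_assoc, hper _ (by positivity), ih]
  refine tendsto_nhds_unique (tendsto_const_nhds (x := D θ) (f := (atTop : Filter ℕ))) ?_
  simpa [Function.comp_def, hconst] using
    hlim.comp (tendsto_atTop_add_const_left atTop θ tendsto_natCast_atTop_atTop)

lemma tendsto_tsum_digammaTerm_atTop {r : ℝ} (hr : 0 < r) :
    Tendsto (fun θ => ∑' z, digammaTerm r θ z) atTop (𝓝 0) := by
  refine tendsto_zero_of_nonneg_of_le_div (r + 1) ?_ ?_ <;>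
    filter_upwards [eventually_gt_atTop 0] with θ hθ
  · exact tsum_nonneg fun z => (digammaTerm_pos hr hθ z).le
  · exact tsum_digammaTerm_le hr hθ

lemma tendsto_psi_add_sub_psi_atTop {r : ℝ} (hr : 0 ≤ r) :
    Tendsto (fun x => psi (x + r) - psi x) atTop (𝓝 0) := by
  refine tendsto_zero_of_nonneg_of_le_div ⌈r⌉₊ ?_ ?_ <;>
    filter_upwards [eventually_gt_atTop 0] with x hx
  · exact sub_nonneg.mpr (psi_monotoneOn hx (by simp; positivity) (by linarith))
  · exact psi_add_sub_psi_le hx hr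

lemma tsum_digammaTerm {r θ : ℝ} (hr : 0 < r) (hθ : 0 < θ) :
    ∑' z, digammaTerm r θ z = psi (r + θ) - psi θ := by
  have hD := eq_zero_of_add_one_eq_of_tendsto
    (D := fun x => ∑' z, digammaTerm r x z - (psi (x + r) - psi x)) ?_
    (by simpa using (tendsto_tsum_digammaTerm_atTop hr).sub (tendsto_psi_add_sub_psi_atTop hr.le))
    hθ
  · rw [add_comm r θ]
    linarith
  · intro x hx
    have := tsum_digammaTerm_sub_tsum_add_one hr hx
    rw [add_right_comm, psi_add_one (by positivity), psi_add_one hx, add_comm x r]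
    linarith

theorem stmt_0 (r θ : ℝ) (hr : 0 < r) (hθ : 0 < θ) :
    HasSum (fun z : ℕ => risingFac r (z + 1) / (risingFac (r + θ) (z + 1) * ((z : ℝ) + 1)))
      (psi (r + θ) - psi θ) ∧
    HasSum (fun z : ℕ => digammaPMF r θ (z + 1)) 1 := by
  have hsum : HasSum (digammaTerm r θ) (psi (r + θ) - psi θ) :=
    tsum_digammaTerm hr hθ ▸ (summable_digammaTerm hr hθ).hasSum
  refine ⟨hsum, ?_⟩
  have hpos : 0 < psi (r + θ) - psi θ :=
    tsum_digammaTerm hr hθ ▸ (summable_digammaTerm hr hθ).tsum_pos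
      (fun z => (digammaTerm_pos hr hθ z).le) 0 (digammaTerm_pos hr hθ 0)
  have hpmf := hsum.mul_left (psi (r + θ) - psi θ)⁻¹
  rw [inv_mul_cancel₀ hpos.ne'] at hpmf
  refine hpmf.congr_fun fun z => ?_
  simp only [digammaPMF, digammaTerm, Nat.cast_succ]
end

section
/- For all real numbers r > 0 and θ > 0, the integral ∫₀¹ (1 − (1−p)^r) · p^{−1}(1−p)^{θ−1} dp is finite and equals ψ(θ+r) − ψ(θ). (This computes the total mass of the measure p ↦ (1−(1−p)^r)·θ·p^{−1}(1−p)^{θ−1} dp arising as the intensity of distinct atoms of a negative binomial process with beta process base measure, and gives the Poisson mean c[ψ(c+r) − ψ(c)]·B̃₀(Ω) in the finitary construction of the beta negative binomial process.) -/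
/-!
Regularize by a factor `p ^ s`. For `s > 0` the integral splits into two beta integrals,
`B(s, θ) - B(s, θ + r)`, and by dominated convergence it tends to the original integral as
`s → 0⁺`. Writing `B(s, a) = Γ(s) · Γ(a) / Γ(s + a)`, the pole `Γ(s) ~ 1/s` turns the difference
into a difference quotient of `s ↦ Γ(θ)/Γ(s + θ) - Γ(θ + r)/Γ(s + θ + r)` at `0`, whose derivative
there is `ψ(θ + r) - ψ(θ)`.
-/

open MeasureTheory

open Set Filter Topology

-- the paper's intensity of distinct atoms, divided by `θ`
noncomputable def atomIntensity (r θ p : ℝ) : ℝ :=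
  (1 - (1 - p) ^ r) * (p⁻¹ * (1 - p) ^ (θ - 1))

lemma ofReal_rpow_mul_one_sub_rpow {a b x : ℝ} (hx : x ∈ Icc (0 : ℝ) 1) :
    ((x ^ (a - 1) * (1 - x) ^ (b - 1) : ℝ) : ℂ)
      = (x : ℂ) ^ ((a : ℂ) - 1) * (1 - (x : ℂ)) ^ ((b : ℂ) - 1) := by
  have hx' : 0 ≤ 1 - x := sub_nonneg.2 hx.2
  push_cast [Complex.ofReal_cpow hx.1, Complex.ofReal_cpow hx']
  norm_cast

lemma integrableOn_rpow_mul_one_sub_rpow {a b : ℝ} (ha : 0 < a) (hb : 0 < b) :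
    IntegrableOn (fun x : ℝ => x ^ (a - 1) * (1 - x) ^ (b - 1)) (Ioo 0 1) := by
  have h := Complex.betaIntegral_convergent (u := a) (v := b) (by simpa) (by simpa)
  rw [intervalIntegrable_iff_integrableOn_Ioc_of_le zero_le_one] at h
  refine (IntegrableOn.mono_set h.re Ioo_subset_Ioc_self).congr_fun (fun x hx => ?_)
    measurableSet_Ioo
  simp only [← ofReal_rpow_mul_one_sub_rpow (Ioo_subset_Icc_self hx), RCLike.re_to_complex,
    Complex.ofReal_re]

lemma integral_rpow_mul_one_sub_rpow {a b : ℝ} (ha : 0 < a) (hb : 0 < b) :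
    ∫ x in Ioo (0 : ℝ) 1, x ^ (a - 1) * (1 - x) ^ (b - 1) = ProbabilityTheory.beta a b := by
  rw [ProbabilityTheory.beta_eq_betaIntegralReal a b ha hb, Complex.betaIntegral,
    ← intervalIntegral.integral_congr (fun x hx => ofReal_rpow_mul_one_sub_rpow
      (by rwa [uIcc_of_le zero_le_one] at hx)),
    intervalIntegral.integral_ofReal, Complex.ofReal_re, intervalIntegral.integral_of_le zero_le_one,
    integral_Ioc_eq_integral_Ioo]

lemma one_sub_one_sub_rpow_le {r p : ℝ} (hp : p ∈ Ioo (0 : ℝ) 1) :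
    1 - (1 - p) ^ r ≤ max r 1 * p := by
  rcases le_total 1 r with h | h
  · have hbern := one_add_mul_self_le_rpow_one_add (s := -p) (by linarith [hp.2]) h
    rw [← sub_eq_add_neg] at hbern
    nlinarith [le_max_left r 1, hp.1]
  · have hpow : (1 - p) ^ (1 : ℝ) ≤ (1 - p) ^ r :=
      Real.rpow_le_rpow_of_exponent_ge (by linarith [hp.2]) (by linarith [hp.1]) h
    rw [Real.rpow_one] at hpow
    nlinarith [le_max_right r 1, hp.1]

lemma atomIntensity_nonneg {r θ p : ℝ} (hr : 0 ≤ r) (hp : p ∈ Ioo (0 : ℝ) 1) :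
    0 ≤ atomIntensity r θ p := by
  have h1p : 0 < 1 - p := sub_pos.2 hp.2
  exact mul_nonneg (sub_nonneg.2 (Real.rpow_le_one h1p.le (by linarith [hp.1]) hr))
    (mul_nonneg (inv_nonneg.2 hp.1.le) (Real.rpow_nonneg h1p.le _))

lemma atomIntensity_le {r θ p : ℝ} (hp : p ∈ Ioo (0 : ℝ) 1) :
    atomIntensity r θ p ≤ max r 1 * (1 - p) ^ (θ - 1) := by
  calc atomIntensity r θ p = (1 - (1 - p) ^ r) / p * (1 - p) ^ (θ - 1) := by
        rw [atomIntensity]; ring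
    _ ≤ max r 1 * (1 - p) ^ (θ - 1) :=
        mul_le_mul_of_nonneg_right ((div_le_iff₀ hp.1).2 (one_sub_one_sub_rpow_le hp))
          (Real.rpow_nonneg (sub_pos.2 hp.2).le _)

lemma continuousOn_one_sub_rpow (c : ℝ) :
    ContinuousOn (fun p : ℝ => (1 - p) ^ c) (Ioo 0 1) :=
  (continuousOn_const.sub continuousOn_id).rpow_const fun _ hp => Or.inl (sub_pos.2 hp.2).ne'

lemma integrableOn_atomIntensity {r θ : ℝ} (hr : 0 ≤ r) (hθ : 0 < θ) :
    IntegrableOn (atomIntensity r θ) (Ioo 0 1) := by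
  have hdom : IntegrableOn (fun p : ℝ => max r 1 * (1 - p) ^ (θ - 1)) (Ioo 0 1) := by
    simpa [IntegrableOn] using (integrableOn_rpow_mul_one_sub_rpow one_pos hθ).const_mul (max r 1)
  refine hdom.mono' ?_ ((ae_restrict_iff' measurableSet_Ioo).2 (.of_forall fun p hp => ?_))
  · refine (ContinuousOn.mul ?_ ?_).aestronglyMeasurable measurableSet_Ioo
    · exact continuousOn_const.sub (continuousOn_one_sub_rpow r)
    · exact (continuousOn_inv₀.mono fun _ hp => hp.1.ne').mul (continuousOn_one_sub_rpow _)
  · rw [Real.norm_of_nonneg (atomIntensity_nonneg hr hp)]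
    exact atomIntensity_le hp

lemma integral_rpow_mul_atomIntensity {r θ s : ℝ} (hs : 0 < s) (hθ : 0 < θ) (hθr : 0 < θ + r) :
    ∫ p in Ioo (0 : ℝ) 1, p ^ s * atomIntensity r θ p
      = ProbabilityTheory.beta s θ - ProbabilityTheory.beta s (θ + r) := by
  have hsplit : EqOn (fun p : ℝ => p ^ s * atomIntensity r θ p)
      (fun p => p ^ (s - 1) * (1 - p) ^ (θ - 1) - p ^ (s - 1) * (1 - p) ^ (θ + r - 1))
      (Ioo 0 1) := fun p hp => by
    simp only [atomIntensity]
    rw [Real.rpow_sub_one hp.1.ne', show θ + r - 1 = θ - 1 + r by ring,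
      Real.rpow_add (sub_pos.2 hp.2)]
    ring
  rw [setIntegral_congr_fun measurableSet_Ioo hsplit,
    integral_sub (integrableOn_rpow_mul_one_sub_rpow hs hθ)
      (integrableOn_rpow_mul_one_sub_rpow hs hθr),
    integral_rpow_mul_one_sub_rpow hs hθ, integral_rpow_mul_one_sub_rpow hs hθr]

lemma tendsto_setIntegral_rpow_mul {G : ℝ → ℝ} (hG : IntegrableOn G (Ioo 0 1)) :
    Tendsto (fun s : ℝ => ∫ p in Ioo (0 : ℝ) 1, p ^ s * G p) (𝓝[>] 0)
      (𝓝 (∫ p in Ioo (0 : ℝ) 1, G p)) := by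
  refine tendsto_integral_filter_of_dominated_convergence (fun p => ‖G p‖)
    (.of_forall fun s => ?_) ?_ hG.norm ?_
  · exact ((continuousOn_id.rpow_const fun p hp => Or.inl hp.1.ne').aestronglyMeasurable
      measurableSet_Ioo).mul hG.aestronglyMeasurable
  · filter_upwards [self_mem_nhdsWithin] with s hs
    refine (ae_restrict_iff' measurableSet_Ioo).2 (.of_forall fun p hp => ?_)
    rw [norm_mul, Real.norm_of_nonneg (Real.rpow_nonneg hp.1.le s)]
    exact mul_le_of_le_one_left (norm_nonneg _) (Real.rpow_le_one hp.1.le hp.2.le (le_of_lt hs))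
  · refine (ae_restrict_iff' measurableSet_Ioo).2 (.of_forall fun p hp => ?_)
    simpa using ((Real.continuousAt_const_rpow (b := 0) hp.1.ne').tendsto.mono_left
      nhdsWithin_le_nhds).mul_const (G p)

lemma hasDerivAt_Gamma_div_Gamma_add {a : ℝ} (ha : 0 < a) :
    HasDerivAt (fun s => Real.Gamma a / Real.Gamma (s + a)) (-psi a) 0 := by
  have hΓa : Real.Gamma a ≠ 0 := (Real.Gamma_pos_of_pos ha).ne'
  have hΓ : HasDerivAt (fun s => Real.Gamma (s + a)) (deriv Real.Gamma a) 0 :=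
    HasDerivAt.comp_add_const 0 a <| by
      rw [zero_add]
      exact (Real.differentiableAt_Gamma fun m => by linarith [m.cast_nonneg (α := ℝ)]).hasDerivAt
  have h := (hΓ.inv (by rwa [zero_add])).const_mul (Real.Gamma a)
  have hval : Real.Gamma a * (-deriv Real.Gamma a / Real.Gamma (0 + a) ^ 2) = -psi a := by
    rw [psi, zero_add]
    field_simp
  rw [hval] at h
  exact h.congr_of_eventuallyEq (.of_forall fun s => div_eq_mul_inv _ _)

lemma tendsto_Gamma_mul_nhdsNE_zero {h : ℝ → ℝ} {L : ℝ} (hh : HasDerivAt h L 0) (h0 : h 0 = 0) :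
    Tendsto (fun s => Real.Gamma s * h s) (𝓝[≠] 0) (𝓝 L) := by
  have hΓ : Tendsto (fun s : ℝ => Real.Gamma (s + 1)) (𝓝[≠] 0) (𝓝 1) := by
    have hcont : ContinuousAt Real.Gamma 1 :=
      (Real.differentiableAt_Gamma fun m => by linarith [m.cast_nonneg (α := ℝ)]).continuousAt
    have hshift : Tendsto (fun s : ℝ => s + 1) (𝓝 0) (𝓝 1) := by
      simpa using (continuous_add_const (1 : ℝ)).tendsto 0
    have h := (hcont.tendsto.comp hshift).mono_left (nhdsWithin_le_nhds (s := {0}ᶜ))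
    rwa [Real.Gamma_one] at h
  rw [← one_mul L]
  refine (hΓ.mul (hasDerivAt_iff_tendsto_slope.1 hh)).congr' ?_
  filter_upwards [self_mem_nhdsWithin] with s (hs : s ≠ 0)
  rw [slope_def_field, h0, sub_zero, sub_zero, Real.Gamma_add_one hs]
  field_simp

lemma tendsto_beta_sub_beta {a b : ℝ} (ha : 0 < a) (hb : 0 < b) :
    Tendsto (fun s => ProbabilityTheory.beta s a - ProbabilityTheory.beta s b) (𝓝[>] 0)
      (𝓝 (psi b - psi a)) := by
  have hdiff := (hasDerivAt_Gamma_div_Gamma_add ha).sub (hasDerivAt_Gamma_div_Gamma_add hb)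
  rw [neg_sub_neg] at hdiff
  have h0 : Real.Gamma a / Real.Gamma (0 + a) - Real.Gamma b / Real.Gamma (0 + b) = 0 := by
    rw [zero_add, zero_add, div_self (Real.Gamma_pos_of_pos ha).ne',
      div_self (Real.Gamma_pos_of_pos hb).ne', sub_self]
  refine ((tendsto_Gamma_mul_nhdsNE_zero hdiff h0).mono_left (nhdsGT_le_nhdsNE 0)).congr
    fun s => ?_
  simp only [ProbabilityTheory.beta, Pi.sub_apply]
  ring

theorem stmt_7 (r θ : ℝ) (hr : 0 < r) (hθ : 0 < θ) :
    IntegrableOn (fun p : ℝ => (1 - (1 - p) ^ r) * (p⁻¹ * (1 - p) ^ (θ - 1))) (Set.Ioo 0 1) ∧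
    ∫ p in Set.Ioo (0 : ℝ) 1, (1 - (1 - p) ^ r) * (p⁻¹ * (1 - p) ^ (θ - 1))
      = psi (θ + r) - psi θ := by
  have hθr : 0 < θ + r := add_pos hθ hr
  have hint := integrableOn_atomIntensity hr.le hθ
  refine ⟨hint, tendsto_nhds_unique ?_ (tendsto_beta_sub_beta hθ hθr)⟩
  refine (tendsto_setIntegral_rpow_mul hint).congr' ?_
  filter_upwards [self_mem_nhdsWithin] with s (hs : 0 < s)
  exact integral_rpow_mul_atomIntensity hs hθ hθr
end

section
/- Exchangeability of the NB-IBP: for every integer n ≥ 1, all real numbers c > 0, r > 0, T > 0, every permutation π of {1,…,n}, and every finitely supported function m : H_n → ℤ₊, the NB-IBP mass function satisfies F_n(m) = F_n(m ∘ π*), where π* : H_n → H_n is the bijection (π* h)(j) := h(π(j)). Equivalently, the joint distribution of the multiplicities (M_h)_{h∈H_n} is invariant under every permutation of the n coordinates: (M_h)_{h∈H_n} has the same distribution as (M_{h∘π})_{h∈H_n}. -/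
open scoped BigOperators

/-- The set of histories `H_n`: length-`n` tuples of non-negative integers, not all zero. -/
def Hist (n : ℕ) : Type := {h : Fin n → ℕ // h ≠ 0}

/-- `s(h) = ∑_j h(j)`. -/
def histSum {n : ℕ} (h : Fin n → ℕ) : ℕ := ∑ j, h j

/-- The weight `Γ(s(h))Γ(c+nr)/Γ(c+nr+s(h)) · ∏_j (r)_{h(j)}/h(j)!` of a history `h`. -/
noncomputable def histWeight (n : ℕ) (c r : ℝ) (h : Fin n → ℕ) : ℝ :=
  Real.Gamma (histSum h) * Real.Gamma (c + n * r) / Real.Gamma (c + n * r + histSum h) *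
    ∏ j, risingFac r (h j) / (h j).factorial

/-- The NB-IBP mass function on finitely supported multiplicity functions `m : H_n → ℤ₊`. -/
noncomputable def NBIBPpmf (n : ℕ) (c r T : ℝ) (m : Hist n →₀ ℕ) : ℝ :=
  (c * T) ^ (∑ h ∈ m.support, m h) / (∏ h ∈ m.support, ((m h).factorial : ℝ)) *
    Real.exp (-(c * T) * (psi (c + n * r) - psi c)) *
    ∏ h ∈ m.support, histWeight n c r h.1 ^ m h

/-- The bijection `π* : H_n → H_n` given by `(π* h)(j) = h(π(j))`. -/
def permHist {n : ℕ} (π : Equiv.Perm (Fin n)) : Hist n ≃ Hist n :=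
  Equiv.subtypeEquiv (π.symm.arrowCongr (Equiv.refl ℕ)) <| by
    intro h
    simp only [Equiv.arrowCongr_apply, Equiv.coe_refl, Equiv.symm_symm, ne_eq, not_iff_not]
    constructor
    · rintro rfl
      funext j
      simp [Function.comp]
    · intro hc
      funext j
      have := congrFun hc (π.symm j)
      simpa [Function.comp] using this

/-- The finitely supported function `m ∘ π*`, i.e. `h ↦ m (π* h)`. -/
noncomputable def compPerm {n : ℕ} (π : Equiv.Perm (Fin n)) (m : Hist n →₀ ℕ) : Hist n →₀ ℕ :=
  Finsupp.equivMapDomain (permHist π).symm m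

lemma histWeight_comp {n : ℕ} (c r : ℝ) (σ : Equiv.Perm (Fin n)) (h : Fin n → ℕ) :
    histWeight n c r (fun j => h (σ j)) = histWeight n c r h := by
  unfold histWeight histSum
  rw [Equiv.sum_comp σ h, Equiv.prod_comp σ (fun j => risingFac r (h j) / (h j).factorial)]

theorem stmt_13 (n : ℕ) (hn : 1 ≤ n) (c r T : ℝ) (hc : 0 < c) (hr : 0 < r) (hT : 0 < T)
    (π : Equiv.Perm (Fin n)) (m : Hist n →₀ ℕ) :
    NBIBPpmf n c r T m = NBIBPpmf n c r T (compPerm π m) := by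
  have hweight : ∀ h : Hist n, histWeight n c r (((permHist π).symm h).1)
      = histWeight n c r h.1 := by
    intro h
    have : (((permHist π).symm h).1) = fun j => h.1 (π.symm j) := rfl
    rw [this, histWeight_comp]
  have hsum : (∑ h ∈ (compPerm π m).support, (compPerm π m) h) = ∑ h ∈ m.support, m h := by
    show (Finsupp.equivMapDomain (permHist π).symm m).sum (fun _ v => v)
        = m.sum (fun _ v => v)
    rw [Finsupp.sum_equivMapDomain]
  have hfac : (∏ h ∈ (compPerm π m).support, (((compPerm π m) h).factorial : ℝ))
      = ∏ h ∈ m.support, ((m h).factorial : ℝ) := by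
    show (Finsupp.equivMapDomain (permHist π).symm m).prod (fun _ v => (v.factorial : ℝ))
        = m.prod (fun _ v => (v.factorial : ℝ))
    rw [Finsupp.prod_equivMapDomain]
  have hw : (∏ h ∈ (compPerm π m).support, histWeight n c r h.1 ^ (compPerm π m) h)
      = ∏ h ∈ m.support, histWeight n c r h.1 ^ m h := by
    show (Finsupp.equivMapDomain (permHist π).symm m).prod
        (fun h v => histWeight n c r h.1 ^ v)
        = m.prod (fun h v => histWeight n c r h.1 ^ v)
    rw [Finsupp.prod_equivMapDomain]
    exact Finsupp.prod_congr fun h _ => by rw [hweight]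
  unfold NBIBPpmf
  rw [hsum, hfac, hw]
end
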